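/- Let R be an associative ring with identity and let m, n ≥ 1. Then R^[m]·R^[n] ⊆ R^[m+n−2], i.e. the product of any element of R^[m] with any element of R^[n] lies in R^[m+n−2]. -/

import Mathlib

/-- The left-normed iterated Lie commutator `[x, l₁, l₂, …, l_k]`
where `[a, b] = a * b - b * a`. -/
def leftNormedLie {R : Type*} [Ring R] (x : R) (l : List R) : R :=
  l.foldl (fun a b => a * b - b * a) x

/-- `lieTerm R n` is `R^[n]`: for `n ≥ 2`, the two-sided ideal of `R` generated by all
left-normed Lie commutators `[x₁, …, xₙ]` of ring elements; `R^[1] = R` (and `R^[0] = R`). -/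
def lieTerm (R : Type*) [Ring R] (n : ℕ) : TwoSidedIdeal R :=
  if n ≤ 1 then ⊤
  else TwoSidedIdeal.span
    {r : R | ∃ (x : R) (l : List R), l.length = n - 1 ∧ r = leftNormedLie x l}

/-- `strongLieTerm R n` is `R^(n)`: `R^(1) = R` and for `n ≥ 2`, the two-sided ideal of `R`
generated by all `[x, y]` with `x ∈ R^(n-1)` and `y ∈ R`. -/
def strongLieTerm (R : Type*) [Ring R] : ℕ → TwoSidedIdeal R
  | 0 => ⊤
  | 1 => ⊤
  | n + 2 => TwoSidedIdeal.span
      {r : R | ∃ x, x ∈ strongLieTerm R (n + 1) ∧ ∃ y : R, r = x * y - y * x}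

/-- A ring is Lie nilpotent if `R^[n] = 0` for some positive integer `n`. -/
def IsLieNilpotentRing (R : Type*) [Ring R] : Prop :=
  ∃ n : ℕ, 0 < n ∧ lieTerm R n = ⊥

/-- The lower Lie nilpotency index `t_L(R)`: the minimal positive `n` with `R^[n] = 0`. -/
noncomputable def lowerLieIndex (R : Type*) [Ring R] : ℕ :=
  sInf {n : ℕ | 0 < n ∧ lieTerm R n = ⊥}

/-- The upper Lie nilpotency index `t^L(R)`: the minimal positive `n` with `R^(n) = 0`. -/
noncomputable def upperLieIndex (R : Type*) [Ring R] : ℕ :=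
  sInf {n : ℕ | 0 < n ∧ strongLieTerm R n = ⊥}


/-!
Let `γₖ` be the additive span of the left-normed commutators of weight `k`; the Jacobi identity
gives `⁅γᵢ, γⱼ⁆ ⊆ γᵢ₊ⱼ`. For `U ∈ γₚ` and `V ∈ γ_q`, expanding `⁅U, ⁅V, s r⁆⁆` by the Leibniz rule
writes `⁅U, r⁆ ⁅V, s⁆ + ⁅U, s⁆ ⁅V, r⁆` through brackets `⁅U, W⁆` with `W` of weight at least
`q + 1`, so it lies in `R^[p+q+1]`. Using this antisymmetry twice moves an entry from one factor
to the other: `⁅⁅U, a⁆, r⁆ ⁅V, s⁆ ≡ ⁅U, r⁆ ⁅⁅V, a⁆, s⁆` modulo `R^[p+q+1]`. Moving all entries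
of `U` but the first one over leaves `⁅x, r⁆ ⁅W, s⁆` with `⁅W, s⁆` of weight `p + q`, hence
`⁅U, r⁆ ⁅V, s⁆ ∈ R^[p+q]`. Finally `⁅U, a⁆ r ⁅V, s⁆ = ⁅U, a r⁆ ⁅V, s⁆ - a ⁅U, r⁆ ⁅V, s⁆`, and
products of the two ideals are sums of such terms.
-/

attribute [local instance] LieRing.ofAssociativeRing

section TwoSidedIdeal

variable {R : Type*} [Ring R]

theorem TwoSidedIdeal.lie_mem (I : TwoSidedIdeal R) {u : R} (hu : u ∈ I) (y : R) : ⁅u, y⁆ ∈ I := by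
  rw [Ring.lie_def]
  exact I.sub_mem (I.mul_mem_right u y hu) (I.mul_mem_left y u hu)

theorem TwoSidedIdeal.mul_mem_of_mem_span {S T : Set R} {I : TwoSidedIdeal R}
    (h : ∀ s ∈ S, ∀ r : R, ∀ t ∈ T, s * r * t ∈ I) {a b : R} (ha : a ∈ span S)
    (hb : b ∈ span T) : a * b ∈ I := by
  have hS : ∀ t ∈ T, ∀ a ∈ span S, ∀ r : R, a * r * t ∈ I := by
    intro t ht a ha
    induction ha using TwoSidedIdeal.span_induction with
    | mem s hs => exact fun r ↦ h s hs r t ht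
    | zero => simp
    | add x y _ _ hx hy => exact fun r ↦ by simpa [add_mul] using I.add_mem (hx r) (hy r)
    | neg x _ hx => exact fun r ↦ by simpa using I.neg_mem (hx r)
    | left_absorb c x _ hx => exact fun r ↦ by simpa [mul_assoc] using I.mul_mem_left c _ (hx r)
    | right_absorb c x _ hx => exact fun r ↦ by simpa [mul_assoc] using hx (c * r)
  induction hb using TwoSidedIdeal.span_induction generalizing a with
  | mem t ht => simpa using hS t ht a ha 1
  | zero => simp
  | add x y _ _ hx hy => simpa [mul_add] using I.add_mem (hx ha) (hy ha)
  | neg x _ hx => simpa using I.neg_mem (hx ha)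
  | left_absorb c x _ hx => simpa [mul_assoc] using hx (TwoSidedIdeal.mul_mem_right _ a c ha)
  | right_absorb c x _ hx => simpa [mul_assoc] using I.mul_mem_right _ c (hx ha)

end TwoSidedIdeal

section LeftNormed

variable {R : Type*} [Ring R]

theorem leftNormedLie_append_singleton (x : R) (l : List R) (y : R) :
    leftNormedLie x (l ++ [y]) = ⁅leftNormedLie x l, y⁆ := by
  simp [leftNormedLie, Ring.lie_def]

/-- `c = [x, l₁, …, lⱼ]`, a commutator of weight `j + 1`. -/
def IsLeftNormedLie (j : ℕ) (c : R) : Prop :=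
  ∃ (x : R) (l : List R), l.length = j ∧ c = leftNormedLie x l

theorem IsLeftNormedLie.lie {j : ℕ} {c : R} (hc : IsLeftNormedLie j c) (y : R) :
    IsLeftNormedLie (j + 1) ⁅c, y⁆ := by
  obtain ⟨x, l, rfl, rfl⟩ := hc
  exact ⟨x, l ++ [y], by simp, (leftNormedLie_append_singleton x l y).symm⟩

theorem isLeftNormedLie_succ_iff {j : ℕ} {c : R} :
    IsLeftNormedLie (j + 1) c ↔ ∃ u y : R, IsLeftNormedLie j u ∧ c = ⁅u, y⁆ := by
  refine ⟨fun ⟨x, l, hl, hc⟩ ↦ ?_, fun ⟨u, y, hu, hc⟩ ↦ hc ▸ hu.lie y⟩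
  rcases List.eq_nil_or_concat' l with rfl | ⟨l', y, rfl⟩
  · simp at hl
  · refine ⟨leftNormedLie x l', y, ⟨x, l', by simpa using hl, rfl⟩, ?_⟩
    rw [hc, leftNormedLie_append_singleton]

variable (R) in
def leftNormedSpan (j : ℕ) : AddSubgroup R :=
  AddSubgroup.closure {c : R | IsLeftNormedLie j c}

theorem IsLeftNormedLie.mem_leftNormedSpan {j : ℕ} {c : R} (hc : IsLeftNormedLie j c) :
    c ∈ leftNormedSpan R j :=
  AddSubgroup.subset_closure hc

theorem lie_mem_leftNormedSpan_succ {j : ℕ} {z : R} (hz : z ∈ leftNormedSpan R j) (y : R) :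
    ⁅z, y⁆ ∈ leftNormedSpan R (j + 1) := by
  induction hz using AddSubgroup.closure_induction with
  | mem c hc => exact (IsLeftNormedLie.lie hc y).mem_leftNormedSpan
  | zero => simp
  | add a b _ _ ha hb => simpa [add_lie] using add_mem ha hb
  | neg a _ ha => simpa [neg_lie] using neg_mem ha

theorem IsLeftNormedLie.lie_mem_leftNormedSpan {i j : ℕ} {c d : R} (hc : IsLeftNormedLie i c)
    (hd : IsLeftNormedLie j d) : ⁅c, d⁆ ∈ leftNormedSpan R (i + j + 1) := by
  induction j generalizing i c d with
  | zero => exact (hc.lie d).mem_leftNormedSpan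
  | succ j ih =>
    obtain ⟨d, y, hd', rfl⟩ := isLeftNormedLie_succ_iff.1 hd
    have h₁ : ⁅⁅c, d⁆, y⁆ ∈ leftNormedSpan R (i + (j + 1) + 1) :=
      lie_mem_leftNormedSpan_succ (ih hc hd') y
    have h₂ : ⁅⁅c, y⁆, d⁆ ∈ leftNormedSpan R (i + (j + 1) + 1) := by
      simpa [Nat.add_right_comm, Nat.add_assoc] using ih (hc.lie y) hd'
    rw [leibniz_lie, ← lie_skew d]
    exact add_mem h₁ (neg_mem h₂)

end LeftNormed

section LieTerm

variable {R : Type*} [Ring R]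

theorem lieTerm_eq_span (j : ℕ) :
    lieTerm R (j + 2) = TwoSidedIdeal.span {c | IsLeftNormedLie (j + 1) c} := by
  rw [lieTerm, if_neg (by omega)]
  rfl

theorem IsLeftNormedLie.mem_lieTerm {j : ℕ} {c : R} (hc : IsLeftNormedLie j c) :
    c ∈ lieTerm R (j + 1) := by
  cases j with
  | zero => simp [lieTerm]
  | succ j =>
    rw [lieTerm_eq_span]
    exact TwoSidedIdeal.subset_span hc

theorem lieTerm_antitone : Antitone (lieTerm R) := by
  refine antitone_nat_of_succ_le fun j ↦ ?_
  cases j with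
  | zero => simp [lieTerm]
  | succ j =>
    rw [lieTerm_eq_span, TwoSidedIdeal.span_le]
    intro c hc
    obtain ⟨u, y, hu, rfl⟩ := isLeftNormedLie_succ_iff.1 hc
    exact (lieTerm R (j + 1)).lie_mem hu.mem_lieTerm y

theorem mem_lieTerm_of_mem_leftNormedSpan {j k : ℕ} {z : R} (hz : z ∈ leftNormedSpan R j)
    (hk : k ≤ j + 1) : z ∈ lieTerm R k := by
  induction hz using AddSubgroup.closure_induction with
  | mem c hc => exact lieTerm_antitone hk (IsLeftNormedLie.mem_lieTerm hc)
  | zero => exact zero_mem _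
  | add a b _ _ ha hb => exact add_mem ha hb
  | neg a _ ha => exact neg_mem ha

end LieTerm

section GuptaLevin

variable {R : Type*} [Ring R] {p q : ℕ} {U V : R}

theorem IsLeftNormedLie.lie_mul_lie_add_lie_mul_lie_mem_lieTerm (hU : IsLeftNormedLie p U)
    (hV : IsLeftNormedLie q V) (r s : R) :
    ⁅U, r⁆ * ⁅V, s⁆ + ⁅U, s⁆ * ⁅V, r⁆ ∈ lieTerm R (p + q + 3) := by
  have hUW {j : ℕ} {W : R} (hW : IsLeftNormedLie j W) (hj : q + 1 ≤ j) :
      ⁅U, W⁆ ∈ lieTerm R (p + q + 3) :=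
    mem_lieTerm_of_mem_leftNormedSpan (hU.lie_mem_leftNormedSpan hW) (by omega)
  have key : ⁅U, r⁆ * ⁅V, s⁆ + ⁅U, s⁆ * ⁅V, r⁆ =
      ⁅U, ⁅V, s * r⁆⁆ - s * ⁅U, ⁅V, r⁆⁆ - ⁅U, ⁅⁅V, s⁆, r⁆⁆ - r * ⁅U, ⁅V, s⁆⁆ := by
    simp only [LieRing.of_associative_ring_bracket]
    noncomm_ring
  rw [key]
  exact sub_mem (sub_mem (sub_mem (hUW (hV.lie _) le_rfl)
    (TwoSidedIdeal.mul_mem_left _ s _ (hUW (hV.lie r) le_rfl)))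
    (hUW ((hV.lie s).lie r) (by omega)))
    (TwoSidedIdeal.mul_mem_left _ r _ (hUW (hV.lie s) le_rfl))

theorem IsLeftNormedLie.lie_lie_mul_lie_sub_lie_mul_lie_lie_mem_lieTerm
    (hU : IsLeftNormedLie p U) (hV : IsLeftNormedLie q V) (a b c : R) :
    ⁅⁅U, a⁆, b⁆ * ⁅V, c⁆ - ⁅U, b⁆ * ⁅⁅V, a⁆, c⁆ ∈ lieTerm R (p + q + 3) := by
  have S := hU.lie_mul_lie_add_lie_mul_lie_mem_lieTerm hV
  have key : ⁅⁅U, a⁆, b⁆ * ⁅V, c⁆ - ⁅U, b⁆ * ⁅⁅V, a⁆, c⁆ =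
      (⁅U, a⁆ * ⁅V, b * c⁆ + ⁅U, b * c⁆ * ⁅V, a⁆)
        - (⁅U, a⁆ * ⁅V, b⁆ + ⁅U, b⁆ * ⁅V, a⁆) * c
        - b * (⁅U, a⁆ * ⁅V, c⁆ + ⁅U, c⁆ * ⁅V, a⁆) := by
    simp only [LieRing.of_associative_ring_bracket]
    noncomm_ring
  rw [key]
  exact sub_mem (sub_mem (S a (b * c)) (TwoSidedIdeal.mul_mem_right _ _ c (S a b)))
    (TwoSidedIdeal.mul_mem_left _ b _ (S a c))

theorem IsLeftNormedLie.lie_mul_lie_mem_lieTerm (hU : IsLeftNormedLie p U)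
    (hV : IsLeftNormedLie q V) (r s : R) : ⁅U, r⁆ * ⁅V, s⁆ ∈ lieTerm R (p + q + 2) := by
  induction p generalizing q U V with
  | zero =>
    exact TwoSidedIdeal.mul_mem_left _ _ _ (by simpa using (hV.lie s).mem_lieTerm)
  | succ p ih =>
    obtain ⟨U, a, hU₀, rfl⟩ := isLeftNormedLie_succ_iff.1 hU
    have hmove := hU₀.lie_lie_mul_lie_sub_lie_mul_lie_lie_mem_lieTerm hV a r s
    have htail : ⁅U, r⁆ * ⁅⁅V, a⁆, s⁆ ∈ lieTerm R (p + q + 3) := ih hU₀ (hV.lie a)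
    rw [Nat.add_right_comm p 1 q]
    simpa using add_mem hmove htail

theorem IsLeftNormedLie.mul_mul_mem_lieTerm {u v : R} (hu : IsLeftNormedLie (p + 1) u)
    (hv : IsLeftNormedLie (q + 1) v) (r : R) : u * r * v ∈ lieTerm R (p + q + 2) := by
  obtain ⟨U, a, hU, rfl⟩ := isLeftNormedLie_succ_iff.1 hu
  obtain ⟨V, s, hV, rfl⟩ := isLeftNormedLie_succ_iff.1 hv
  have key : ⁅U, a⁆ * r * ⁅V, s⁆ = ⁅U, a * r⁆ * ⁅V, s⁆ - a * (⁅U, r⁆ * ⁅V, s⁆) := by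
    simp only [LieRing.of_associative_ring_bracket]
    noncomm_ring
  rw [key]
  exact sub_mem (hU.lie_mul_lie_mem_lieTerm hV (a * r) s)
    (TwoSidedIdeal.mul_mem_left _ a _ (hU.lie_mul_lie_mem_lieTerm hV r s))

end GuptaLevin

theorem lieTerm_mul_lieTerm_subset_general
    (R : Type*) [Ring R] (m n : ℕ) :
    ∀ a ∈ lieTerm R m, ∀ b ∈ lieTerm R n, a * b ∈ lieTerm R (m + n - 2) := by
  intro a ha b hb
  rcases Nat.lt_or_ge m 2 with hm | hm
  · exact TwoSidedIdeal.mul_mem_left _ a b (lieTerm_antitone (by omega) hb)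
  rcases Nat.lt_or_ge n 2 with hn | hn
  · exact TwoSidedIdeal.mul_mem_right _ a b (lieTerm_antitone (by omega) ha)
  obtain ⟨p, rfl⟩ := Nat.exists_eq_add_of_le' hm
  obtain ⟨q, rfl⟩ := Nat.exists_eq_add_of_le' hn
  rw [lieTerm_eq_span] at ha hb
  rw [show p + 2 + (q + 2) - 2 = p + q + 2 by omega]
  exact TwoSidedIdeal.mul_mem_of_mem_span (fun u hu r v hv ↦ hu.mul_mul_mem_lieTerm hv r) ha hb

/-- For `m, n ≥ 1`, `R^[m] · R^[n] ⊆ R^[m+n-2]`. -/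
theorem lieTerm_mul_lieTerm_subset
    (R : Type*) [Ring R] (m n : ℕ) (hm : 1 ≤ m) (hn : 1 ≤ n) :
    ∀ a ∈ lieTerm R m, ∀ b ∈ lieTerm R n, a * b ∈ lieTerm R (m + n - 2) :=
  lieTerm_mul_lieTerm_subset_general R m n
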